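/- If the signed graph (H,γ_H) is a signed graph minor of (G,γ_G), then tOCP-tw(H,γ_H) ≤ tOCP-tw(G,γ_G). -/

import Mathlib

namespace TDMPaper

/-- A finite multigraph without loops: edges carry their unordered pair of endpoints. -/
structure MGraph where
  V : Type
  E : Type
  finV : Finite V
  finE : Finite E
  ends : E → Sym2 V
  loopless : ∀ e, ¬ (ends e).IsDiag

attribute [instance] MGraph.finV MGraph.finE

namespace MGraph

/-- A cycle in a multigraph, given by cyclically ordered distinct vertices and
distinct edges. -/
structure Cycle (G : MGraph) where
  n : ℕ
  npos : 0 < n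
  vtx : Fin n → G.V
  edge : Fin n → G.E
  vtx_inj : Function.Injective vtx
  edge_inj : Function.Injective edge
  ends_eq : ∀ i : Fin n,
    G.ends (edge i) = s(vtx i, vtx ⟨(i.1 + 1) % n, Nat.mod_lt _ npos⟩)

/-- The parity of a cycle with respect to a signing `γ`. -/
def Cycle.parity {G : MGraph} (C : G.Cycle) (γ : G.E → ZMod 2) : ZMod 2 :=
  ∑ i, γ (C.edge i)

/-- The vertex set of a cycle. -/
def Cycle.support {G : MGraph} (C : G.Cycle) : Set G.V := Set.range C.vtx

/-- The odd cycle packing number of a signed graph: the maximum number of pairwise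
vertex-disjoint odd cycles. -/
noncomputable def OCP (G : MGraph) (γ : G.E → ZMod 2) : ℕ :=
  sSup {k : ℕ | ∃ C : Fin k → G.Cycle,
    (∀ i, (C i).parity γ = 1) ∧
    ∀ i j, i ≠ j → Disjoint ((C i).support) ((C j).support)}

/-- The subgraph induced by a vertex set `S` (kept on the same vertex type; only
edges with both endpoints in `S` survive). -/
def induce (G : MGraph) (S : Set G.V) : MGraph where
  V := G.V
  E := {e : G.E // ∀ v ∈ G.ends e, v ∈ S}
  finV := G.finV
  finE := inferInstance
  ends := fun e => G.ends e.1
  loopless := fun e => G.loopless e.1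

/-- The odd cycle packing number of the subgraph induced on `S`, signs inherited. -/
noncomputable def OCPOn (G : MGraph) (γ : G.E → ZMod 2) (S : Set G.V) : ℕ :=
  (G.induce S).OCP (fun e => γ e.1)

/-- A path in a multigraph. -/
structure Path (G : MGraph) where
  n : ℕ
  vtx : Fin (n + 1) → G.V
  edge : Fin n → G.E
  vtx_inj : Function.Injective vtx
  ends_eq : ∀ i : Fin n, G.ends (edge i) = s(vtx i.castSucc, vtx i.succ)

def Path.first {G : MGraph} (P : G.Path) : G.V := P.vtx 0
def Path.last {G : MGraph} (P : G.Path) : G.V := P.vtx (Fin.last P.n)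
def Path.support {G : MGraph} (P : G.Path) : Set G.V := Set.range P.vtx
def Path.internals {G : MGraph} (P : G.Path) : Set G.V :=
  P.support \ {P.first, P.last}
def Path.parity {G : MGraph} (P : G.Path) (γ : G.E → ZMod 2) : ZMod 2 :=
  ∑ i, γ (P.edge i)

end MGraph

open MGraph

/-- `γ'` is obtained from `γ` by a sequence of shiftings at vertices. -/
def IsShift (G : MGraph) (γ γ' : G.E → ZMod 2) : Prop :=
  ∃ σ : G.V → ZMod 2, ∀ e u v, G.ends e = s(u, v) → γ' e = γ e + σ u + σ v

/-- A minor model of `H` in `G`: disjoint nonempty connected branch sets and an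
injective assignment of edges. -/
structure MinorModel (H G : MGraph) where
  bs : H.V → Set G.V
  em : H.E → G.E
  bs_nonempty : ∀ v, (bs v).Nonempty
  bs_disjoint : ∀ u v, u ≠ v → Disjoint (bs u) (bs v)
  bs_connected : ∀ v, ∀ a ∈ bs v, ∀ b ∈ bs v,
    Relation.ReflTransGen
      (fun x y => x ∈ bs v ∧ y ∈ bs v ∧ ∃ e, G.ends e = s(x, y)) a b
  em_inj : Function.Injective em
  em_ends : ∀ eH u v, H.ends eH = s(u, v) →
    ∃ a ∈ bs u, ∃ b ∈ bs v, G.ends (em eH) = s(a, b)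

/-- `H` is a minor of `G`. -/
def IsMinor (H G : MGraph) : Prop := Nonempty (MinorModel H G)

/-- `(H,KH)` is a rooted minor of `(G,KG)`: there is a minor model in which the
branch set of every root of `H` contains a root of `G`. -/
def IsRootedMinor (H : MGraph) (KH : Set H.V) (G : MGraph) (KG : Set G.V) : Prop :=
  ∃ M : MinorModel H G, ∀ v ∈ KH, (M.bs v ∩ KG).Nonempty

/-- A signed minor model of `(H,γH)` in `(G,γG)`: after shifting, branch sets are
connected through even edges and edges of `H` get edges of `G` of the correct sign. -/
structure SignedMinorModel (H G : MGraph) (γH : H.E → ZMod 2) (γG : G.E → ZMod 2) where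
  γ' : G.E → ZMod 2
  shift : IsShift G γG γ'
  bs : H.V → Set G.V
  em : H.E → G.E
  bs_nonempty : ∀ v, (bs v).Nonempty
  bs_disjoint : ∀ u v, u ≠ v → Disjoint (bs u) (bs v)
  bs_connected : ∀ v, ∀ a ∈ bs v, ∀ b ∈ bs v,
    Relation.ReflTransGen
      (fun x y => x ∈ bs v ∧ y ∈ bs v ∧ ∃ e, γ' e = 0 ∧ G.ends e = s(x, y)) a b
  em_inj : Function.Injective em
  em_ends : ∀ eH u v, H.ends eH = s(u, v) →
    ∃ a ∈ bs u, ∃ b ∈ bs v, G.ends (em eH) = s(a, b)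
  em_parity : ∀ eH, γ' (em eH) = γH eH

/-- `(H,γH)` is a signed graph minor of `(G,γG)`. -/
def IsSignedMinor (H : MGraph) (γH : H.E → ZMod 2) (G : MGraph)
    (γG : G.E → ZMod 2) : Prop :=
  Nonempty (SignedMinorModel H G γH γG)

/-- `(H,γH,KH)` is a rooted signed graph minor of `(G,γG,KG)`. -/
def IsRootedSignedMinor (H : MGraph) (γH : H.E → ZMod 2) (KH : Set H.V)
    (G : MGraph) (γG : G.E → ZMod 2) (KG : Set G.V) : Prop :=
  ∃ M : SignedMinorModel H G γH γG, ∀ v ∈ KH, (M.bs v ∩ KG).Nonempty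

/-- An odd minor model of `H` in `G`: a minor model together with a 2-colouring of
`G` which is proper on each branch set (branch sets are connected through
bichromatic edges) and for which every model edge is monochromatic. -/
structure OddMinorModel (H G : MGraph) where
  bs : H.V → Set G.V
  em : H.E → G.E
  col : G.V → ZMod 2
  bs_nonempty : ∀ v, (bs v).Nonempty
  bs_disjoint : ∀ u v, u ≠ v → Disjoint (bs u) (bs v)
  bs_connected : ∀ v, ∀ a ∈ bs v, ∀ b ∈ bs v,
    Relation.ReflTransGen
      (fun x y => x ∈ bs v ∧ y ∈ bs v ∧ col x ≠ col y ∧ ∃ e, G.ends e = s(x, y)) a b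
  em_inj : Function.Injective em
  em_ends : ∀ eH u v, H.ends eH = s(u, v) →
    ∃ a ∈ bs u, ∃ b ∈ bs v, G.ends (em eH) = s(a, b)
  em_mono : ∀ eH u v, G.ends (em eH) = s(u, v) → col u = col v

/-- `G` contains `H` as an odd-minor. -/
def IsOddMinor (H G : MGraph) : Prop := Nonempty (OddMinorModel H G)

/-- `(G,γG)` contains `(H,γH)` as a subdivision. -/
def IsSignedSubdivision (H : MGraph) (γH : H.E → ZMod 2) (G : MGraph)
    (γG : G.E → ZMod 2) : Prop :=
  ∃ (γH' : H.E → ZMod 2) (_ : IsShift H γH γH')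
    (φV : H.V → G.V) (φE : H.E → G.Path),
    Function.Injective φV ∧
    (∀ eH u v, H.ends eH = s(u, v) →
      s((φE eH).first, (φE eH).last) = s(φV u, φV v)) ∧
    (∀ eH, (φE eH).parity γG = γH' eH) ∧
    (∀ e e', e ≠ e' → Disjoint ((φE e).internals) ((φE e').support)) ∧
    (∀ e, Disjoint ((φE e).internals) (Set.range φV))

/-! ## Tree decompositions and width parameters -/

/-- A tree decomposition of a multigraph. -/
structure TreeDecomp (G : MGraph) where
  ι : Type
  tree : SimpleGraph ι
  isTree : tree.IsTree
  bag : ι → Set G.V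
  covers_vertex : ∀ v, ∃ t, v ∈ bag t
  covers_edge : ∀ e, ∃ t, ∀ v ∈ G.ends e, v ∈ bag t
  bag_connected : ∀ v, (tree.induce {t | v ∈ bag t}).Connected

/-- A node of a tree is a leaf if it has at most one neighbour. -/
def IsLeaf {ι : Type} (T : SimpleGraph ι) (t : ι) : Prop :=
  (T.neighborSet t).Subsingleton

/-- A tree `K`-free-decomposition. -/
structure KFreeDecomp (G : MGraph) (K : Set G.V) extends TreeDecomp G where
  L : Set G.V
  L_disj : Disjoint L K
  unique_bag : ∀ v ∈ L, ∃! t, v ∈ bag t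
  leaf_bag : ∀ v ∈ L, ∀ t, v ∈ bag t → IsLeaf tree t

/-- The width of a tree `K`-free-decomposition: `max {0, max_t |β(t)\L| - 1}`. -/
noncomputable def KFreeDecomp.width {G : MGraph} {K : Set G.V}
    (D : KFreeDecomp G K) : ℕ :=
  ⨆ t : D.ι, ((D.bag t \ D.L).ncard - 1)

/-- The `K`-free treewidth of `(G,K)`. -/
noncomputable def twK (G : MGraph) (K : Set G.V) : ℕ :=
  sInf {w | ∃ D : KFreeDecomp G K, D.width = w}

/-- A tame OCP-tree-decomposition of a signed graph. -/
structure TameOCPDecomp (G : MGraph) (γ : G.E → ZMod 2) extends TreeDecomp G where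
  prot : ι → Set G.V
  prot_sub : ∀ t, prot t ⊆ bag t
  prot_adh : ∀ t t', tree.Adj t t' → ((bag t ∩ bag t') \ prot t).ncard ≤ 1

/-- The tame width (t-width) of a tame OCP-tree-decomposition. -/
noncomputable def TameOCPDecomp.twidth {G : MGraph} {γ : G.E → ZMod 2}
    (D : TameOCPDecomp G γ) : ℕ :=
  ⨆ t : D.ι, ((D.prot t).ncard + G.OCPOn γ (D.bag t \ D.prot t))

/-- The tame OCP-treewidth of a signed graph. -/
noncomputable def tOCPtw (G : MGraph) (γ : G.E → ZMod 2) : ℕ :=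
  sInf {w | ∃ D : TameOCPDecomp G γ, D.twidth = w}

/-- A TDM-tree-decomposition of a rooted signed graph. -/
structure TDMDecomp (G : MGraph) (γ : G.E → ZMod 2) (K : Set G.V)
    extends TreeDecomp G where
  prot : ι → Set G.V
  J : Set ι
  J_subtree : J.Nonempty → (tree.induce J).Connected
  prot_sub : ∀ t, prot t ⊆ bag t
  prot_roots : ∀ t, K ∩ bag t ⊆ prot t
  prot_adh : ∀ t t', tree.Adj t t' → ((bag t ∩ bag t') \ prot t).ncard ≤ 1
  strong : ∀ t ∈ J, ∀ t', tree.Adj t t' → bag t ∩ bag t' ⊆ prot t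
  roots_in_J : K ⊆ ⋃ j ∈ J, bag j

/-- The width of a TDM-tree-decomposition. -/
noncomputable def TDMDecomp.width {G : MGraph} {γ : G.E → ZMod 2} {K : Set G.V}
    (D : TDMDecomp G γ K) : ℕ :=
  ⨆ t : D.ι, ((D.prot t).ncard + G.OCPOn γ (D.bag t \ D.prot t))

/-- The TDM-treewidth of a rooted signed graph. -/
noncomputable def TDMtw (G : MGraph) (γ : G.E → ZMod 2) (K : Set G.V) : ℕ :=
  sInf {w | ∃ D : TDMDecomp G γ K, D.width = w}

/-! ## Grids, parity handles, parity vortices -/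

/-- Adjacency of the grid, on `ℕ × ℕ` coordinates. -/
def gridAdj (a b : ℕ × ℕ) : Prop :=
  (a.1 = b.1 ∧ (a.2 + 1 = b.2 ∨ b.2 + 1 = a.2)) ∨
  (a.2 = b.2 ∧ (a.1 + 1 = b.1 ∨ b.1 + 1 = a.1))

/-- The `k × k` grid. -/
def gridGraph (k : ℕ) : MGraph where
  V := Fin k × Fin k
  E := {e : Sym2 (Fin k × Fin k) //
    ∃ a b : Fin k × Fin k, gridAdj (a.1.1, a.2.1) (b.1.1, b.2.1) ∧ e = s(a, b)}
  finV := inferInstance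
  finE := inferInstance
  ends := Subtype.val
  loopless := fun e he => by
    obtain ⟨a, b, hab, h⟩ := e.2
    rw [h, Sym2.mk_isDiag_iff] at he
    subst he
    rcases hab with ⟨_, h' | h'⟩ | ⟨_, h' | h'⟩ <;> omega

/-- The first row of the `k × k` grid. -/
def firstRow (k : ℕ) : Set (gridGraph k).V := {p : Fin k × Fin k | p.1.1 = 0}

/-- The `i`-th designated vertex `x_i` on the outer face of the cylindrical
`(k × 4k)`-grid (every other vertex, `0`-indexed). -/
def xvtx (k : ℕ) (i : Fin (2 * k)) : Fin k × Fin (4 * k) :=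
  (⟨0, by have := i.2; omega⟩, ⟨2 * i.1, by have := i.2; omega⟩)

/-- Adjacency of the cylindrical `(k × 4k)`-grid `P_k □ C_{4k}`. -/
def cylAdj (k : ℕ) (a b : Fin k × Fin (4 * k)) : Prop :=
  (a.1 = b.1 ∧ (a.2.1 + 1 = b.2.1 ∨ b.2.1 + 1 = a.2.1 ∨
    (a.2.1 = 0 ∧ b.2.1 + 1 = 4 * k) ∨ (b.2.1 = 0 ∧ a.2.1 + 1 = 4 * k))) ∨
  (a.2 = b.2 ∧ (a.1.1 + 1 = b.1.1 ∨ b.1.1 + 1 = a.1.1))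

/-- The chords `x_i x_{2k-i+1}` of the parity handle. -/
def handleChord (k : ℕ) (e : Sym2 (Fin k × Fin (4 * k))) : Prop :=
  ∃ i : Fin k, e = s(xvtx k ⟨i.1, by have := i.2; omega⟩,
    xvtx k ⟨2 * k - 1 - i.1, by have := i.2; omega⟩)

/-- The chords `x_{2i-1} x_{2i}` of the parity vortex. -/
def vortexChord (k : ℕ) (e : Sym2 (Fin k × Fin (4 * k))) : Prop :=
  ∃ i : Fin k, e = s(xvtx k ⟨2 * i.1, by have := i.2; omega⟩,
    xvtx k ⟨2 * i.1 + 1, by have := i.2; omega⟩)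

lemma xvtx_ne (k : ℕ) (i j : Fin (2 * k)) (h : i.1 ≠ j.1) : xvtx k i ≠ xvtx k j := by
  intro hc
  have := congrArg (fun p => p.2.1) hc
  simp only [xvtx] at this
  omega

/-- The unsigned, unrooted parity handle `H_k`. -/
def handleGraph (k : ℕ) : MGraph where
  V := Fin k × Fin (4 * k)
  E := {e : Sym2 (Fin k × Fin (4 * k)) //
    (∃ a b, cylAdj k a b ∧ e = s(a, b)) ∨ handleChord k e}
  finV := inferInstance
  finE := inferInstance
  ends := Subtype.val
  loopless := fun e he => by
    rcases e.2 with ⟨a, b, hab, h⟩ | ⟨i, h⟩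
    · rw [h, Sym2.mk_isDiag_iff] at he
      subst he
      have h1 := a.1.2
      have h2 := a.2.2
      rcases hab with ⟨_, h' | h' | ⟨h', h''⟩ | ⟨h', h''⟩⟩ | ⟨_, h' | h'⟩ <;> omega
    · rw [h, Sym2.mk_isDiag_iff] at he
      have := i.2
      exact xvtx_ne k _ _ (show (i.1 : ℕ) ≠ 2 * k - 1 - i.1 by omega) he

/-- The unsigned, unrooted parity vortex `V_k`. -/
def vortexGraph (k : ℕ) : MGraph where
  V := Fin k × Fin (4 * k)
  E := {e : Sym2 (Fin k × Fin (4 * k)) //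
    (∃ a b, cylAdj k a b ∧ e = s(a, b)) ∨ vortexChord k e}
  finV := inferInstance
  finE := inferInstance
  ends := Subtype.val
  loopless := fun e he => by
    rcases e.2 with ⟨a, b, hab, h⟩ | ⟨i, h⟩
    · rw [h, Sym2.mk_isDiag_iff] at he
      subst he
      have h1 := a.1.2
      have h2 := a.2.2
      rcases hab with ⟨_, h' | h' | ⟨h', h''⟩ | ⟨h', h''⟩⟩ | ⟨_, h' | h'⟩ <;> omega
    · rw [h, Sym2.mk_isDiag_iff] at he
      have := i.2
      exact xvtx_ne k _ _ (show (2 * i.1 : ℕ) ≠ 2 * i.1 + 1 by omega) he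

/-- The all-zero signing. -/
def γ₀ (G : MGraph) : G.E → ZMod 2 := fun _ => 0

/-- The all-one signing. -/
def γ₁ (G : MGraph) : G.E → ZMod 2 := fun _ => 1

/-! ## Matrices with two nonzero entries per row -/

/-- `A` has exactly two nonzero entries in every row. -/
def TwoNonzeroPerRow {m n : ℕ} (A : Matrix (Fin m) (Fin n) ℤ) : Prop :=
  ∀ i, {j | A i j ≠ 0}.ncard = 2

/-- The graph `G(A)` of a matrix with exactly two nonzero entries per row:
vertices are columns, edges are rows, each row joining its two nonzero columns. -/
noncomputable def matrixGraph {m n : ℕ} (A : Matrix (Fin m) (Fin n) ℤ)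
    (h : TwoNonzeroPerRow A) : MGraph where
  V := Fin n
  E := Fin m
  finV := inferInstance
  finE := inferInstance
  ends := fun i => s((Set.ncard_eq_two.mp (h i)).choose,
    (Set.ncard_eq_two.mp (h i)).choose_spec.choose)
  loopless := fun i hi => by
    rw [Sym2.mk_isDiag_iff] at hi
    exact (Set.ncard_eq_two.mp (h i)).choose_spec.choose_spec.1 hi

/-- The signing of `G(A)`: a row is even iff its two nonzero entries have
different signs (i.e. the product of its nonzero entries is negative). -/
def matrixSign {m n : ℕ} (A : Matrix (Fin m) (Fin n) ℤ) : Fin m → ZMod 2 :=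
  fun i => if (∏ j ∈ Finset.univ.filter (fun j => A i j ≠ 0), A i j) < 0 then 0 else 1

/-- The roots of `G⁺_•(A)`: columns containing an entry outside `{-1,0,1}`. -/
def matrixRoots {m n : ℕ} (A : Matrix (Fin m) (Fin n) ℤ) : Set (Fin n) :=
  {j | ∃ i, 1 < (A i j).natAbs}

/-- The TDM-treewidth of the rooted signed graph `G⁺_•(A)` associated to `A`. -/
noncomputable def matrixTDMtw {m n : ℕ} (A : Matrix (Fin m) (Fin n) ℤ)
    (h : TwoNonzeroPerRow A) : ℕ :=
  TDMtw (matrixGraph A h) (fun e => matrixSign A e) (fun j => matrixRoots A j)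

/-- The largest absolute value of an entry of `A`. -/
def maxAbsEntry {m n : ℕ} (A : Matrix (Fin m) (Fin n) ℤ) : ℕ :=
  Finset.sup Finset.univ fun i => Finset.sup Finset.univ fun j => (A i j).natAbs

/-- `A` is totally `Δ`-modular: every square subdeterminant has absolute value at
most `Δ`. -/
def TotallyDeltaModular {m n : ℕ} (A : Matrix (Fin m) (Fin n) ℤ) (Δ : ℕ) : Prop :=
  ∀ (s : ℕ) (r : Fin s → Fin m) (c : Fin s → Fin n),
    Function.Injective r → Function.Injective c →
    ((A.submatrix r c).det).natAbs ≤ Δ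

/-- The set of objective values of feasible points of the integer program
`max { wᵀx : Ax ≤ b, ℓ ≤ x ≤ u, x integral }`. -/
def IPvalues {m n : ℕ} (A : Matrix (Fin m) (Fin n) ℤ) (b : Fin m → ℤ)
    (w ℓ u : Fin n → ℤ) : Set ℤ :=
  {y | ∃ x : Fin n → ℤ, (∀ i, ∑ j, A i j * x j ≤ b i) ∧
    (∀ j, ℓ j ≤ x j ∧ x j ≤ u j) ∧ y = ∑ j, w j * x j}

/-- `o` solves the maximization problem over `S`: it is `none` iff `S` is
infeasible, and otherwise it is the maximum value. -/
def SolvesIP (o : Option ℤ) (S : Set ℤ) : Prop :=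
  (o = none ∧ S = ∅) ∨ ∃ y, o = some y ∧ IsGreatest S y


lemma exists_pair {α : Type} (z : Sym2 α) : ∃ p : α × α, z = s(p.1, p.2) :=
  Sym2.ind (fun a b => ⟨(a, b), rfl⟩) z

/-- A chosen first endpoint of an edge. -/
noncomputable def MGraph.ep1 (G : MGraph) (e : G.E) : G.V :=
  (exists_pair (G.ends e)).choose.1

/-- A chosen second endpoint of an edge. -/
noncomputable def MGraph.ep2 (G : MGraph) (e : G.E) : G.V :=
  (exists_pair (G.ends e)).choose.2

lemma MGraph.ends_ep (G : MGraph) (e : G.E) : G.ends e = s(G.ep1 e, G.ep2 e) :=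
  (exists_pair (G.ends e)).choose_spec

lemma map_inl_not_isDiag {α β : Type} (z : Sym2 α) (hz : ¬ z.IsDiag) :
    ¬ (z.map (Sum.inl : α → α ⊕ β)).IsDiag := by
  induction z using Sym2.ind with
  | _ a b =>
    simp only [Sym2.map_pair_eq, Sym2.mk_isDiag_iff] at *
    exact fun h => hz (by injection h)

/-- The graph obtained from `(G,γ)` by subdividing every even edge exactly once. -/
noncomputable def subdivideEven (G : MGraph) (γ : G.E → ZMod 2) : MGraph where
  V := G.V ⊕ {e : G.E // γ e = 0}
  E := {e : G.E // γ e ≠ 0} ⊕ ({e : G.E // γ e = 0} × Bool)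
  finV := inferInstance
  finE := inferInstance
  ends := fun x =>
    match x with
    | .inl e => (G.ends e.1).map .inl
    | .inr (e, b) => s(.inr e, .inl (if b then G.ep1 e.1 else G.ep2 e.1))
  loopless := fun x => by
    match x with
    | .inl e => exact map_inl_not_isDiag _ (G.loopless e.1)
    | .inr (e, b) =>
      rw [Sym2.mk_isDiag_iff]
      simp

/-- Minimum degree at least `d` (each vertex is incident to at least `d` edges). -/
def minDegreeGE (G : MGraph) (d : ℕ) : Prop :=
  ∀ v : G.V, d ≤ {e : G.E | v ∈ G.ends e}.ncard

/-- The `j`-th vertex of the subdividing path: `u`, then `ℓ` new internal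
vertices, then `v`. -/
def pathVert {α : Type} (u v : α) (ℓ : ℕ) (j : Fin (ℓ + 2)) : α ⊕ Fin ℓ :=
  if h0 : j.1 = 0 then .inl u
  else if h1 : j.1 = ℓ + 1 then .inl v
  else .inr ⟨j.1 - 1, by have := j.2; omega⟩

/-- The graph obtained from `G` by replacing the edge `e₀` (with ends `u,v`) by a
path with `ℓ` internal vertices (hence `ℓ + 1` edges). -/
def replaceEdge (G : MGraph) (e₀ : G.E) (u v : G.V) (h : G.ends e₀ = s(u, v))
    (ℓ : ℕ) : MGraph where
  V := G.V ⊕ Fin ℓ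
  E := {e : G.E // e ≠ e₀} ⊕ Fin (ℓ + 1)
  finV := inferInstance
  finE := inferInstance
  ends := fun x =>
    match x with
    | .inl e => (G.ends e.1).map .inl
    | .inr i => s(pathVert u v ℓ ⟨i.1, by have := i.2; omega⟩,
        pathVert u v ℓ ⟨i.1 + 1, by have := i.2; omega⟩)
  loopless := fun x => by
    match x with
    | .inl e => exact map_inl_not_isDiag _ (G.loopless e.1)
    | .inr i =>
      rw [Sym2.mk_isDiag_iff]
      have huv : u ≠ v := by
        intro hc
        exact G.loopless e₀ (by rw [h, hc]; simp)
      have hi := i.2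
      simp only [pathVert]
      split_ifs <;> (simp_all; try omega)

/-- The signing of `replaceEdge`: old edges keep their sign, the `i`-th path edge
gets sign `δ i`. -/
def replaceGamma {G : MGraph} {e₀ : G.E} {u v : G.V} {h : G.ends e₀ = s(u, v)}
    {ℓ : ℕ} (γ : G.E → ZMod 2) (δ : Fin (ℓ + 1) → ZMod 2) :
    (replaceEdge G e₀ u v h ℓ).E → ZMod 2 :=
  fun x => match x with
  | .inl e => γ e.1
  | .inr i => δ i

end TDMPaper

/-!
Push a tame decomposition `(T, β, α)` of `G` to `H` along a signed minor model: a vertex `v`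
of `H` goes into `β'(t)` (resp. `α'(t)`) when its branch set meets `β(t)` (resp. `α(t)`).
Connectivity and disjointness of the branch sets make this a tame decomposition with
`|α'(t)| ≤ |α(t)|`. An odd cycle of `H[β'(t) \ α'(t)]` expands, through paths of even edges
inside the branch sets, to an odd cycle of `G` meeting every branch set it visits. These branch
sets are disjoint, meet `β(t)` and avoid `α(t)`; since each adhesion at `t` has at most one
vertex outside `α(t)`, a cycle leaving `β(t)` would force two of them through that vertex. So
the expanded cycle lies in `G[β(t) \ α(t)]`, and disjoint odd cycles of `H` expand to disjoint
odd cycles of `G`.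
-/

lemma Nat.succ_mod_eq_ite {i n : ℕ} (hi : i < n) :
    (i + 1) % n = if i + 1 < n then i + 1 else 0 := by
  split_ifs with h
  · exact Nat.mod_eq_of_lt h
  · rw [show i + 1 = n by omega, Nat.mod_self]

lemma Nat.eq_of_succ_mod_eq {n k k' : ℕ} (hk : k < n) (hk' : k' < n)
    (h : (k + 1) % n = (k' + 1) % n) : k = k' := by
  rw [Nat.succ_mod_eq_ite hk, Nat.succ_mod_eq_ite hk'] at h
  split_ifs at h <;> omega

lemma Nat.succ_mod_pred_mod {n i : ℕ} (hi : i < n) : ((i + n - 1) % n + 1) % n = i := by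
  rw [Nat.mod_add_mod, show i + n - 1 + 1 = i + n by omega, Nat.add_mod_right,
    Nat.mod_eq_of_lt hi]

lemma Finset.sum_range_succ_of_eq {M : Type*} [AddCancelCommMonoid M] (F : ℕ → M) {n : ℕ}
    (h : F n = F 0) : ∑ m ∈ Finset.range n, F (m + 1) = ∑ m ∈ Finset.range n, F m := by
  have := (Finset.sum_range_succ' F n).symm.trans (Finset.sum_range_succ F n)
  rwa [h, add_left_inj] at this

lemma List.headD_append {α : Type*} (A B : List α) (d : α) :
    (A ++ B).headD d = A.headD (B.headD d) := by
  cases A <;> simp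

lemma List.sum_map_flatMap_range {α M : Type*} [AddCommMonoid M] (S : ℕ → List α)
    (f : α → M) (m : ℕ) :
    (((List.range m).flatMap S).map f).sum = ∑ k ∈ Finset.range m, ((S k).map f).sum := by
  induction m with
  | zero => rfl
  | succ m ih =>
    rw [List.range_succ, List.flatMap_append, List.flatMap_singleton, List.map_append,
      List.sum_append, ih, Finset.sum_range_succ]

lemma Set.ncard_le_ncard_of_disjoint_nonempty {α β : Type*} {s : Set α} {t : Set β}
    (f : α → Set β) (hf : ∀ a ∈ s, (f a ∩ t).Nonempty)
    (hd : ∀ a b, a ≠ b → Disjoint (f a) (f b)) (ht : t.Finite := by toFinite_tac) :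
    s.ncard ≤ t.ncard := by
  obtain rfl | ⟨a₀, ha₀⟩ := s.eq_empty_or_nonempty
  · simp
  have : Nonempty β := ⟨(hf a₀ ha₀).some⟩
  have hε : ∀ a ∈ s, Classical.epsilon (· ∈ f a ∩ t) ∈ f a ∩ t := fun a ha =>
    Classical.epsilon_spec (hf a ha)
  refine Set.ncard_le_ncard_of_injOn _ (fun a ha => (hε a ha).2) (fun a ha b hb hab => ?_) ht
  by_contra hne
  exact Set.disjoint_left.1 (hd a b hne) (hε a ha).1 (hab ▸ (hε b hb).1)

namespace SimpleGraph

variable {ι : Type*} {T : SimpleGraph ι}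

def side (T : SimpleGraph ι) (t s : ι) : Set ι :=
  {r | (T.deleteEdges {s(t, s)}).Reachable t r}

lemma mem_side_self (t s : ι) : t ∈ T.side t s :=
  Reachable.refl _

lemma mem_side_of_adj {t s u v : ι} (hu : u ∈ T.side t s) (huv : T.Adj u v)
    (hne : s(u, v) ≠ s(t, s)) : v ∈ T.side t s :=
  hu.trans (deleteEdges_adj.2 ⟨huv, hne⟩).reachable

lemma Connected.mem_side_or_mem_side (hT : T.Connected) (t s r : ι) :
    r ∈ T.side t s ∨ r ∈ T.side s t := by
  suffices ∀ u r (w : T.Walk u r), (u ∈ T.side t s ∨ u ∈ T.side s t) →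
      r ∈ T.side t s ∨ r ∈ T.side s t from
    this t r (hT.preconnected t r).some (Or.inl (mem_side_self _ _))
  intro u r w
  induction w with
  | nil => exact id
  | @cons u v r huv _ ih =>
    refine fun hu => ih ?_
    by_cases he : s(u, v) = s(t, s)
    · rcases Sym2.eq_iff.1 he with ⟨-, rfl⟩ | ⟨-, rfl⟩
      exacts [Or.inr (mem_side_self _ _), Or.inl (mem_side_self _ _)]
    · exact hu.imp (mem_side_of_adj · huv he)
        (mem_side_of_adj · huv (by rwa [Sym2.eq_swap (a := s)]))

lemma IsAcyclic.not_mem_side (hT : T.IsAcyclic) {t s r : ι} (hts : T.Adj t s)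
    (hr : r ∈ T.side t s) : r ∉ T.side s t := fun hr' =>
  isBridge_iff.1 (isAcyclic_iff_forall_adj_isBridge.1 hT hts)
    (hr.trans (by rw [Sym2.eq_swap]; exact hr'.symm))

lemma IsAcyclic.eq_of_adj_of_mem_side (hT : T.IsAcyclic) {t s p q : ι} (hts : T.Adj t s)
    (hp : p ∈ T.side t s) (hq : q ∈ T.side s t) (hpq : T.Adj p q) : p = t ∧ q = s := by
  by_cases he : s(p, q) = s(t, s)
  · rcases Sym2.eq_iff.1 he with h | ⟨rfl, -⟩
    · exact h
    · exact (hT.not_mem_side hts hp (mem_side_self _ _)).elim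
  · exact (hT.not_mem_side hts (mem_side_of_adj hp hpq he) hq).elim

lemma Connected.exists_adj_mem_side (hT : T.Connected) {r t : ι} (hne : r ≠ t) :
    ∃ s, T.Adj t s ∧ r ∈ T.side s t := by
  obtain ⟨p, hp⟩ := (hT.preconnected t r).exists_isPath
  cases p with
  | nil => exact absurd rfl hne
  | cons h q =>
    refine ⟨_, h, ⟨q.toDeleteEdges _ fun e he hmem => ?_⟩⟩
    rw [Set.mem_singleton_iff] at hmem
    subst hmem
    exact ((Walk.cons_isPath_iff _ _).1 hp).2 (q.snd_mem_support_of_mem_edges he)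

lemma IsTree.mem_of_induce_connected (hT : T.IsTree) {S : Set ι}
    (hS : (T.induce S).Connected) {t s r₁ r₂ : ι} (hts : T.Adj t s) (h₁ : r₁ ∈ S)
    (h₁' : r₁ ∈ T.side t s) (h₂ : r₂ ∈ S) (h₂' : r₂ ∈ T.side s t) : t ∈ S ∧ s ∈ S := by
  suffices ∀ u v (w : (T.induce S).Walk u v), u.1 ∈ T.side t s → v.1 ∈ T.side s t →
      t ∈ S ∧ s ∈ S from
    this ⟨r₁, h₁⟩ ⟨r₂, h₂⟩ (hS.preconnected _ _).some h₁' h₂'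
  intro u v w
  induction w with
  | nil => exact fun hu hu' => (hT.isAcyclic.not_mem_side hts hu hu').elim
  | @cons u u' v huu' _ ih =>
    intro hu hv
    rcases hT.connected.mem_side_or_mem_side t s u'.1 with hu' | hu'
    · exact ih hu' hv
    · obtain ⟨rfl, rfl⟩ := hT.isAcyclic.eq_of_adj_of_mem_side hts hu hu' huu'
      exact ⟨u.2, u'.2⟩

end SimpleGraph

namespace TDMPaper

open MGraph Relation

namespace MGraph

def AdjIn (G : MGraph) (Y : Set G.V) (x y : G.V) : Prop :=
  x ∈ Y ∧ y ∈ Y ∧ ∃ e, G.ends e = s(x, y)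

instance (G : MGraph) (Y : Set G.V) : Std.Symm (G.AdjIn Y) where
  symm _ _ := fun ⟨hx, hy, e, he⟩ => ⟨hy, hx, e, by rw [he, Sym2.eq_swap]⟩

namespace Cycle

variable {G : MGraph} (C : G.Cycle)

lemma vtx_mem_support (i : Fin C.n) : C.vtx i ∈ C.support := ⟨i, rfl⟩

lemma support_subset_of_induce {S : Set G.V} (C : (G.induce S).Cycle) : C.support ⊆ S := by
  rintro _ ⟨i, rfl⟩
  exact (C.edge i).2 _ (by
    rw [show G.ends (C.edge i).1 = _ from C.ends_eq i]
    exact Sym2.mem_mk_left _ _)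

def ofInduce {S : Set G.V} (C : (G.induce S).Cycle) : G.Cycle where
  n := C.n
  npos := C.npos
  vtx := C.vtx
  edge i := (C.edge i).1
  vtx_inj := C.vtx_inj
  edge_inj _ _ h := C.edge_inj (Subtype.ext h)
  ends_eq := C.ends_eq

def toInduce {S : Set G.V} (h : C.support ⊆ S) : (G.induce S).Cycle where
  n := C.n
  npos := C.npos
  vtx := C.vtx
  edge i := ⟨C.edge i, fun v hv => by
    rw [C.ends_eq i] at hv
    rcases Sym2.mem_iff.1 hv with rfl | rfl
    exacts [h (C.vtx_mem_support _), h (C.vtx_mem_support _)]⟩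
  vtx_inj := C.vtx_inj
  edge_inj _ _ h := C.edge_inj (congrArg Subtype.val h)
  ends_eq := C.ends_eq

def vtxMod (m : ℕ) : G.V := C.vtx ⟨m % C.n, Nat.mod_lt _ C.npos⟩

lemma vtxMod_val (i : Fin C.n) : C.vtxMod i = C.vtx i := by
  simp [vtxMod, Nat.mod_eq_of_lt i.2]

lemma vtxMod_add_n (m : ℕ) : C.vtxMod (m + C.n) = C.vtxMod m := by
  simp [vtxMod]

lemma ends_edge_mod (m : ℕ) :
    G.ends (C.edge ⟨m % C.n, Nat.mod_lt _ C.npos⟩) = s(C.vtxMod m, C.vtxMod (m + 1)) := by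
  rw [C.ends_eq]
  simp [vtxMod, Nat.add_mod]

lemma two_le_n : 2 ≤ C.n := by
  by_contra! h
  have hn : C.n = 1 := by have := C.npos; omega
  have := C.ends_edge_mod 0
  rw [show 0 + 1 = 0 + C.n by omega, vtxMod_add_n] at this
  exact G.loopless _ (by rw [this]; exact Sym2.mk_isDiag_iff.mpr rfl)

lemma reflTransGen_vtxMod {Y : Set G.V} (m : ℕ) :
    ∀ k, (∀ k' ≤ k, C.vtxMod (m + k') ∈ Y) →
      ReflTransGen (G.AdjIn Y) (C.vtxMod m) (C.vtxMod (m + k)) := by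
  intro k
  induction k with
  | zero => exact fun _ => .refl
  | succ k ih =>
    exact fun hY => (ih fun k' hk' => hY k' (by omega)).tail
      ⟨hY k (by omega), hY (k + 1) le_rfl, _, C.ends_edge_mod (m + k)⟩

lemma reflTransGen_of_forall_ne {Y : Set G.V} (a : Fin C.n) (hY : ∀ p, p ≠ a → C.vtx p ∈ Y)
    {i j : Fin C.n} (hi : C.vtx i ∈ Y) (hj : C.vtx j ∈ Y) :
    ReflTransGen (G.AdjIn Y) (C.vtx i) (C.vtx j) := by
  wlog hij : i.1 ≤ j.1 generalizing i j
  · exact Std.Symm.symm _ _ (this hj hi (by omega))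
  have hmem : ∀ m, m % C.n ≠ a.1 → C.vtxMod m ∈ Y := fun m hm =>
    hY _ fun h => hm (congrArg Fin.val h)
  by_cases ha : i.1 < a.1 ∧ a.1 < j.1
  · -- `a` lies on the arc from `i` to `j`, so go around the other way, from `j` to `i`
    have hjn := j.2
    have h := C.reflTransGen_vtxMod (Y := Y) j (C.n - j + i) fun k' hk' => by
      by_cases hlt : j + k' < C.n
      · exact hmem _ (by rw [Nat.mod_eq_of_lt hlt]; omega)
      · exact hmem _ (by
          rw [Nat.mod_eq_sub_mod (by omega), Nat.mod_eq_of_lt (by omega)]; omega)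
    rw [show (j : ℕ) + (C.n - j + i) = i + C.n by omega, vtxMod_add_n, vtxMod_val,
      vtxMod_val] at h
    exact Std.Symm.symm _ _ h
  · have h := C.reflTransGen_vtxMod (Y := Y) i (j - i) fun k' hk' => by
      have hlt : i + k' < C.n := by have := j.2; omega
      by_cases hk : (i : ℕ) + k' = a
      · rcases (show k' = 0 ∨ k' = j - i by omega) with rfl | rfl
        · simpa [vtxMod_val] using hi
        · rw [show (i : ℕ) + (j - i) = j by omega, vtxMod_val]
          exact hj
      · exact hmem _ (by rwa [Nat.mod_eq_of_lt hlt])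
    rwa [show (i : ℕ) + (j - i) = j by omega, vtxMod_val, vtxMod_val] at h

lemma reflTransGen_diff {Z : Set G.V} (hZ : Z.Subsingleton) {x y : G.V}
    (hx : x ∈ C.support \ Z) (hy : y ∈ C.support \ Z) :
    ReflTransGen (G.AdjIn (C.support \ Z)) x y := by
  obtain ⟨i, rfl⟩ := hx.1
  obtain ⟨j, rfl⟩ := hy.1
  by_cases hZC : ∃ a, C.vtx a ∈ Z
  · obtain ⟨a, ha⟩ := hZC
    refine C.reflTransGen_of_forall_ne a (fun p hp => ?_) hx hy
    exact Set.mem_sdiff_of_mem (C.vtx_mem_support p) fun hpZ => hp (C.vtx_inj (hZ hpZ ha))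
  · push Not at hZC
    exact C.reflTransGen_of_forall_ne i
      (fun p _ => Set.mem_sdiff_of_mem (C.vtx_mem_support p) (hZC p)) hx hy

lemma parity_eq_of_isShift {γ γ' : G.E → ZMod 2} (h : IsShift G γ γ') :
    C.parity γ' = C.parity γ := by
  obtain ⟨σ, hσ⟩ := h
  have hrot : ∑ i : Fin C.n, σ (C.vtxMod (i + 1)) = ∑ i : Fin C.n, σ (C.vtx i) := by
    rw [Fin.sum_univ_eq_sum_range (fun m => σ (C.vtxMod (m + 1))),
      Finset.sum_range_succ_of_eq (fun m => σ (C.vtxMod m))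
        (by rw [← zero_add C.n, vtxMod_add_n]),
      ← Fin.sum_univ_eq_sum_range (fun m => σ (C.vtxMod m))]
    simp only [vtxMod_val]
  calc C.parity γ' = ∑ i, (γ (C.edge i) + (σ (C.vtx i) + σ (C.vtxMod (i + 1)))) :=
        Finset.sum_congr rfl fun i _ => by rw [hσ _ _ _ (C.ends_eq i), add_assoc]; rfl
    _ = C.parity γ := by
        rw [Finset.sum_add_distrib, Finset.sum_add_distrib, hrot, CharTwo.add_self_eq_zero,
          add_zero]
        rfl

end Cycle

variable {G : MGraph}

/-- `G.IsWalk L z`: each edge in the list `L` of vertex–edge pairs joins its vertex to the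
next vertex of the list, or to `z` for the last pair. -/
def IsWalk (G : MGraph) : List (G.V × G.E) → G.V → Prop
  | [], _ => True
  | p :: L, z => G.ends p.2 = s(p.1, (L.map Prod.fst).headD z) ∧ G.IsWalk L z

lemma isWalk_append {L₁ L₂ : List (G.V × G.E)} {z : G.V} :
    G.IsWalk (L₁ ++ L₂) z ↔ G.IsWalk L₁ ((L₂.map Prod.fst).headD z) ∧ G.IsWalk L₂ z := by
  induction L₁ with
  | nil => simp [IsWalk]
  | cons p L₁ ih =>
    rw [List.cons_append, IsWalk, IsWalk, ih, and_assoc, List.map_append, List.headD_append]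

lemma IsWalk.ends_getElem {L : List (G.V × G.E)} {z : G.V} (h : G.IsWalk L z) (i : ℕ)
    (hi : i < L.length) :
    G.ends L[i].2 = s(L[i].1, (L.map Prod.fst ++ [z])[i + 1]'(by simp; omega)) := by
  induction L generalizing i with
  | nil => simp at hi
  | cons p L ih =>
    cases i with
    | zero => cases L <;> simpa [IsWalk] using h.1
    | succ i => simpa using ih h.2 i (by simpa using hi)

lemma isWalk_flatMap_range (S : ℕ → List (G.V × G.E)) (x : ℕ → G.V)
    (hS : ∀ k, G.IsWalk (S k) (x (k + 1)))
    (hx : ∀ k, ((S k).map Prod.fst).headD (x (k + 1)) = x k) (m : ℕ) :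
    G.IsWalk ((List.range m).flatMap S) (x m) ∧
      (((List.range m).flatMap S).map Prod.fst).headD (x m) = x 0 := by
  induction m with
  | zero => exact ⟨trivial, rfl⟩
  | succ m ih =>
    rw [List.range_succ, List.flatMap_append, List.flatMap_singleton, isWalk_append,
      List.map_append, List.headD_append, hx]
    exact ⟨⟨ih.1, hS m⟩, ih.2⟩

lemma exists_append_headD_eq {L : List (G.V × G.E)} {x z : G.V}
    (hx : x ∈ L.map Prod.fst ++ [z]) :
    ∃ L₁ L₂, L = L₁ ++ L₂ ∧ (L₂.map Prod.fst).headD z = x := by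
  induction L with
  | nil => exact ⟨[], [], rfl, by simpa [eq_comm] using hx⟩
  | cons p L ih =>
    by_cases hp : p.1 = x
    · exact ⟨[], p :: L, rfl, hp⟩
    · obtain ⟨L₁, L₂, rfl, h⟩ := ih (by simpa [hp, Ne.symm hp] using hx)
      exact ⟨p :: L₁, L₂, rfl, h⟩

lemma exists_isWalk_nodup_of_reflTransGen {U : Set G.V} {P : G.E → Prop} {a b : G.V}
    (h : ReflTransGen (fun x y => x ∈ U ∧ y ∈ U ∧ ∃ e, P e ∧ G.ends e = s(x, y)) a b) :
    ∃ L : List (G.V × G.E), G.IsWalk L b ∧ (L.map Prod.fst).headD b = a ∧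
      (L.map Prod.fst ++ [b]).Nodup ∧ ∀ p ∈ L, p.1 ∈ U ∧ P p.2 := by
  induction h using ReflTransGen.head_induction_on with
  | refl => exact ⟨[], trivial, rfl, List.nodup_singleton b, by simp⟩
  | @head x c hxc _ ih =>
    obtain ⟨hx, -, e, he, hends⟩ := hxc
    obtain ⟨L, hL, hstart, hnd, hmem⟩ := ih
    by_cases hxL : x ∈ L.map Prod.fst ++ [b]
    · -- shortcut: restart the walk at the earlier visit of `x`
      obtain ⟨L₁, L₂, rfl, hstart₂⟩ := exists_append_headD_eq hxL
      refine ⟨L₂, (isWalk_append.1 hL).2, hstart₂, hnd.sublist ?_,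
        fun p hp => hmem p (List.mem_append_right _ hp)⟩
      simp
    · refine ⟨(x, e) :: L, ⟨by rw [hends, hstart], hL⟩, rfl, List.nodup_cons.2 ⟨hxL, hnd⟩, ?_⟩
      rintro p (_ | ⟨_, hp⟩)
      exacts [⟨hx, he⟩, hmem p hp]

lemma exists_cycle_of_isWalk (γ : G.E → ZMod 2) {L : List (G.V × G.E)} {z : G.V}
    (hL : G.IsWalk L z) (hz : (L.map Prod.fst).headD z = z) (hnd : (L.map Prod.fst).Nodup)
    (hodd : (L.map fun p => γ p.2).sum = 1) :
    ∃ C : G.Cycle, C.support = {v | v ∈ L.map Prod.fst} ∧ C.parity γ = 1 := by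
  have hpos : 0 < L.length := List.length_pos_iff.2 (by rintro rfl; simp at hodd)
  have hends : ∀ i : Fin L.length,
      G.ends L[i.1].2 = s(L[i.1].1, (L[(i.1 + 1) % L.length]'(Nat.mod_lt _ hpos)).1) := by
    intro i
    rw [hL.ends_getElem i i.2]
    congr 1
    by_cases h : i.1 + 1 < L.length
    · simp [Nat.mod_eq_of_lt h, List.getElem_append_left, h]
    · obtain ⟨p, L', rfl⟩ := List.exists_cons_of_length_pos hpos
      have h' : i.1 + 1 = L'.length + 1 := by simp at h; omega
      simp_all
  have hvtx : ∀ i j : Fin L.length, L[i.1].1 = L[j.1].1 → i = j := fun i j h =>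
    Fin.ext ((hnd.getElem_inj_iff (hi := by simp) (hj := by simp)).1 (by simpa using h))
  -- Distinct vertices force distinct edges, except on a closed walk of length two that uses
  -- one edge twice; such a walk is even.
  have hedge : ∀ i j : Fin L.length, L[i.1].2 = L[j.1].2 → i = j := by
    intro i j h
    by_contra hij
    rcases Sym2.eq_iff.1 ((hends i).symm.trans (h ▸ hends j)) with ⟨h1, -⟩ | ⟨h1, h2⟩
    · exact hij (hvtx i j h1)
    have e1 := congrArg Fin.val (hvtx i ⟨_, Nat.mod_lt _ hpos⟩ h1)
    have e2 := congrArg Fin.val (hvtx ⟨_, Nat.mod_lt _ hpos⟩ j h2)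
    simp only [Nat.succ_mod_eq_ite i.2, Nat.succ_mod_eq_ite j.2] at e1 e2
    have hij' : i.1 ≠ j.1 := fun h => hij (Fin.ext h)
    have hn : L.length = 2 := by split_ifs at e1 e2 <;> omega
    obtain ⟨p, q, rfl⟩ := List.length_eq_two.1 hn
    have hpq : p.2 = q.2 := by
      fin_cases i <;> fin_cases j <;> simp_all
    simp [hpq, CharTwo.add_self_eq_zero] at hodd
  refine ⟨⟨L.length, hpos, fun i => L[i.1].1, fun i => L[i.1].2, hvtx, hedge, hends⟩, ?_, ?_⟩
  · ext v
    simp [Cycle.support, List.mem_iff_getElem, Fin.exists_iff]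
  · rw [Cycle.parity, ← hodd, ← List.sum_ofFn, ← List.ofFn_getElem_eq_map]

def oddPackingSizes (G : MGraph) (γ : G.E → ZMod 2) : Set ℕ :=
  {k | ∃ C : Fin k → G.Cycle, (∀ i, (C i).parity γ = 1) ∧
    ∀ i j, i ≠ j → Disjoint ((C i).support) ((C j).support)}

lemma OCP_eq_sSup (G : MGraph) (γ : G.E → ZMod 2) : G.OCP γ = sSup (G.oddPackingSizes γ) :=
  rfl

lemma zero_mem_oddPackingSizes (G : MGraph) (γ : G.E → ZMod 2) : 0 ∈ G.oddPackingSizes γ :=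
  ⟨Fin.elim0, fun i => i.elim0, fun i => i.elim0⟩

lemma le_card_of_mem_oddPackingSizes {γ : G.E → ZMod 2} {k : ℕ}
    (hk : k ∈ G.oddPackingSizes γ) : k ≤ Nat.card G.V := by
  obtain ⟨C, -, hdisj⟩ := hk
  have hinj : Function.Injective fun i => (C i).vtx ⟨0, (C i).npos⟩ :=
    fun i j (hij : (C i).vtx _ = (C j).vtx _) => by
      by_contra hne
      exact Set.disjoint_left.1 (hdisj i j hne) ((C i).vtx_mem_support _)
        (hij ▸ (C j).vtx_mem_support _)
  simpa using Nat.card_le_card_of_injective _ hinj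

lemma OCP_le_card (G : MGraph) (γ : G.E → ZMod 2) : G.OCP γ ≤ Nat.card G.V := by
  rw [OCP_eq_sSup]
  exact csSup_le ⟨0, G.zero_mem_oddPackingSizes γ⟩ fun _ => le_card_of_mem_oddPackingSizes

lemma OCP_le_of_expansion {G₁ G₂ : MGraph} {γ₁ : G₁.E → ZMod 2} {γ₂ : G₂.E → ZMod 2}
    (φ : G₁.V → Set G₂.V) (hφ : ∀ u v, u ≠ v → Disjoint (φ u) (φ v))
    (h : ∀ C : G₁.Cycle, C.parity γ₁ = 1 →
      ∃ C' : G₂.Cycle, C'.parity γ₂ = 1 ∧ C'.support ⊆ ⋃ v ∈ C.support, φ v) :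
    G₁.OCP γ₁ ≤ G₂.OCP γ₂ := by
  rw [OCP_eq_sSup, OCP_eq_sSup]
  refine csSup_le_csSup ⟨_, fun _ => le_card_of_mem_oddPackingSizes⟩
    ⟨0, G₁.zero_mem_oddPackingSizes γ₁⟩ ?_
  rintro k ⟨C, hodd, hdisj⟩
  choose C' hodd' hsub using fun i => h (C i) (hodd i)
  refine ⟨C', hodd', fun i j hij => Set.disjoint_left.2 fun x hxi hxj => ?_⟩
  obtain ⟨u, hu, hxu⟩ := Set.mem_iUnion₂.1 (hsub i hxi)
  obtain ⟨v, hv, hxv⟩ := Set.mem_iUnion₂.1 (hsub j hxj)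
  have huv : u ≠ v := by
    rintro rfl
    exact Set.disjoint_left.1 (hdisj i j hij) hu hv
  exact Set.disjoint_left.1 (hφ u v huv) hxu hxv

end MGraph

namespace TreeDecomp

variable {G : MGraph} (D : TreeDecomp G)

lemma mem_bag_of_mem_side {t s r₁ r₂ : D.ι} (hts : D.tree.Adj t s)
    (h₁ : r₁ ∈ D.tree.side t s) (h₂ : r₂ ∈ D.tree.side s t) {x : G.V} (hx₁ : x ∈ D.bag r₁)
    (hx₂ : x ∈ D.bag r₂) : x ∈ D.bag t ∧ x ∈ D.bag s :=
  D.isTree.mem_of_induce_connected (D.bag_connected x) hts hx₁ h₁ hx₂ h₂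

lemma exists_mem_adhesion {t s : D.ι} (hts : D.tree.Adj t s) {Y : Set G.V} {p q : G.V}
    (hpq : ReflTransGen (G.AdjIn Y) p q) (hp : p ∈ Y) {r₁ r₂ : D.ι}
    (h₁ : r₁ ∈ D.tree.side t s) (hp₁ : p ∈ D.bag r₁) (h₂ : r₂ ∈ D.tree.side s t)
    (hq₂ : q ∈ D.bag r₂) : ∃ y ∈ Y, y ∈ D.bag t ∧ y ∈ D.bag s := by
  induction hpq using ReflTransGen.head_induction_on generalizing r₁ with
  | refl => exact ⟨_, hp, D.mem_bag_of_mem_side hts h₁ h₂ hp₁ hq₂⟩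
  | @head x c hxc _ ih =>
    obtain ⟨hx, hc, e, he⟩ := hxc
    obtain ⟨r, hr⟩ := D.covers_edge e
    have hxr : x ∈ D.bag r := hr x (by rw [he]; exact Sym2.mem_mk_left _ _)
    have hcr : c ∈ D.bag r := hr c (by rw [he]; exact Sym2.mem_mk_right _ _)
    rcases D.isTree.connected.mem_side_or_mem_side t s r with hr' | hr'
    · exact ih hc hr' hcr
    · exact ⟨x, hx, D.mem_bag_of_mem_side hts h₁ hr' hp₁ hxr⟩

lemma support_subset_bag {t : D.ι} {P : Set G.V}
    (hadh : ∀ t', D.tree.Adj t t' → ((D.bag t ∩ D.bag t') \ P).ncard ≤ 1)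
    {κ : Type*} [Nontrivial κ] (U : κ → Set G.V) (hdisj : ∀ i j, i ≠ j → Disjoint (U i) (U j))
    (hconn : ∀ i, ∀ x ∈ U i, ∀ y ∈ U i, ReflTransGen (G.AdjIn (U i)) x y)
    (hbag : ∀ i, (U i ∩ D.bag t).Nonempty) (hP : ∀ i, Disjoint (U i) P)
    (C : G.Cycle) (hCU : C.support ⊆ ⋃ i, U i) (hUC : ∀ i, (U i ∩ C.support).Nonempty) :
    C.support ⊆ D.bag t := by
  intro x hx
  by_contra hxt
  obtain ⟨r₀, hr₀⟩ := D.covers_vertex x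
  obtain ⟨s, hts, hr₀s⟩ :=
    D.isTree.connected.exists_adj_mem_side fun (h : r₀ = t) => hxt (h ▸ hr₀)
  set Z := (D.bag t ∩ D.bag s) \ P
  have hZ : Z.Subsingleton := Set.ncard_le_one_iff_subsingleton.1 (hadh s hts)
  have hCP : ∀ y ∈ C.support, y ∉ P := fun y hy hyP => by
    obtain ⟨i, hi⟩ := Set.mem_iUnion.1 (hCU hy)
    exact Set.disjoint_left.1 (hP i) hi hyP
  -- Each `U i` reaches across the edge `ts`, either along itself or along the cycle minus `Z`,
  -- so it passes through the at most one vertex of `Z`.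
  have hmeet : ∀ i, (U i ∩ Z).Nonempty := by
    intro i
    by_contra hiZ
    obtain ⟨w, hwU, hwC⟩ := hUC i
    have hw : w ∈ C.support \ Z := ⟨hwC, fun hwZ => hiZ ⟨w, hwU, hwZ⟩⟩
    obtain ⟨r, hr⟩ := D.covers_vertex w
    rcases D.isTree.connected.mem_side_or_mem_side t s r with hrt | hrs
    · obtain ⟨y, hy, hyt, hys⟩ := D.exists_mem_adhesion hts
        (C.reflTransGen_diff hZ hw ⟨hx, fun hxZ => hxt hxZ.1.1⟩) hw hrt hr hr₀s hr₀
      exact hy.2 ⟨⟨hyt, hys⟩, hCP y hy.1⟩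
    · obtain ⟨p, hpU, hpt⟩ := hbag i
      obtain ⟨y, hy, hyt, hys⟩ := D.exists_mem_adhesion hts (hconn i p hpU w hwU) hpU
        (SimpleGraph.mem_side_self t s) hpt hrs hr
      exact hiZ ⟨y, hy, ⟨hyt, hys⟩, Set.disjoint_left.1 (hP i) hy⟩
  obtain ⟨i, j, hij⟩ := exists_pair_ne κ
  obtain ⟨y, hyi, hyZ⟩ := hmeet i
  obtain ⟨y', hyj, hyZ'⟩ := hmeet j
  exact Set.disjoint_left.1 (hdisj i j hij) hyi (hZ hyZ' hyZ ▸ hyj)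

lemma induce_connected_of_reflTransGen {Y : Set G.V} (hY : Y.Nonempty)
    (hconn : ∀ x ∈ Y, ∀ y ∈ Y, ReflTransGen (G.AdjIn Y) x y) :
    (D.tree.induce {r | (Y ∩ D.bag r).Nonempty}).Connected := by
  set S := {r | (Y ∩ D.bag r).Nonempty}
  have hsub : ∀ x ∈ Y, {r | x ∈ D.bag r} ⊆ S := fun x hx r hr => ⟨x, hx, hr⟩
  have hbag : ∀ x (hx : x ∈ Y) r r' (hr : x ∈ D.bag r) (hr' : x ∈ D.bag r'),
      (D.tree.induce S).Reachable ⟨r, hsub x hx hr⟩ ⟨r', hsub x hx hr'⟩ :=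
    fun x hx r r' hr hr' => ((D.bag_connected x).preconnected ⟨r, hr⟩ ⟨r', hr'⟩).map
      (D.tree.induceHomOfLE (hsub x hx)).toHom
  have hreach : ∀ x₁ (hx₁ : x₁ ∈ Y) r₁ (hr₁ : x₁ ∈ D.bag r₁) x,
      ReflTransGen (G.AdjIn Y) x₁ x → ∀ (hx : x ∈ Y) r (hr : x ∈ D.bag r),
        (D.tree.induce S).Reachable ⟨r₁, hsub x₁ hx₁ hr₁⟩ ⟨r, hsub x hx hr⟩ := by
    intro x₁ hx₁ r₁ hr₁ x hch
    induction hch with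
    | refl => exact fun _ r hr => hbag x₁ hx₁ r₁ r hr₁ hr
    | @tail c x _ hcx ih =>
      obtain ⟨hc, hx, e, he⟩ := hcx
      obtain ⟨r', hr'⟩ := D.covers_edge e
      intro _ r hr
      exact (ih hc r' (hr' c (by rw [he]; exact Sym2.mem_mk_left _ _))).trans
        (hbag x hx r' r (hr' x (by rw [he]; exact Sym2.mem_mk_right _ _)) hr)
  obtain ⟨x₀, hx₀⟩ := hY
  obtain ⟨r₀, hr₀⟩ := D.covers_vertex x₀
  have : Nonempty S := ⟨⟨r₀, x₀, hx₀, hr₀⟩⟩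
  exact ⟨fun ⟨r₁, x₁, hx₁, hr₁⟩ ⟨r₂, x₂, hx₂, hr₂⟩ =>
    hreach x₁ hx₁ r₁ hr₁ x₂ (hconn x₁ hx₁ x₂ hx₂) hx₂ r₂ hr₂⟩

end TreeDecomp

namespace SignedMinorModel

variable {H G : MGraph} {γH : H.E → ZMod 2} {γG : G.E → ZMod 2}
  (M : SignedMinorModel H G γH γG)

lemma reflTransGen_adjIn (v : H.V) :
    ∀ x ∈ M.bs v, ∀ y ∈ M.bs v, ReflTransGen (G.AdjIn (M.bs v)) x y := fun x hx y hy =>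
  ReflTransGen.mono (fun _ _ ⟨ha, hb, _, _, he⟩ => ⟨ha, hb, _, he⟩) _ _
    (M.bs_connected v x hx y hy)

lemma exists_walk_through_bs {v : H.V} {x y z : G.V} (hx : x ∈ M.bs v) (hy : y ∈ M.bs v)
    {e : G.E} (he : G.ends e = s(y, z)) :
    ∃ S : List (G.V × G.E), G.IsWalk S z ∧ (S.map Prod.fst).headD z = x ∧
      (S.map Prod.fst).Nodup ∧ (∀ w ∈ S.map Prod.fst, w ∈ M.bs v) ∧ y ∈ S.map Prod.fst ∧
      (S.map fun p => M.γ' p.2).sum = M.γ' e := by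
  obtain ⟨P, hPwalk, hPstart, hPnodup, hPmem⟩ :=
    exists_isWalk_nodup_of_reflTransGen (M.bs_connected v x hx y hy)
  have hPeven : (P.map fun p => M.γ' p.2).sum = 0 := List.sum_eq_zero fun _ hc => by
    obtain ⟨p, hp, rfl⟩ := List.mem_map.1 hc
    exact (hPmem p hp).2
  refine ⟨P ++ [(y, e)], isWalk_append.2 ⟨hPwalk, he, trivial⟩,
    by rwa [List.map_append, List.headD_append], by simpa using hPnodup, fun w hw => ?_,
    by simp, by simp [hPeven]⟩
  rcases List.mem_append.1 (List.map_append ▸ hw) with hw | hw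
  · obtain ⟨p, hp, rfl⟩ := List.mem_map.1 hw
    exact (hPmem p hp).1
  · rw [List.mem_singleton.1 hw]
    exact hy

lemma exists_cycle_expansion (C : H.Cycle) (hC : C.parity γH = 1) :
    ∃ D : G.Cycle, D.parity γG = 1 ∧ D.support ⊆ ⋃ i, M.bs (C.vtx i) ∧
      ∀ i, (M.bs (C.vtx i) ∩ D.support).Nonempty := by
  set n := C.n
  let I : ℕ → Fin n := fun k => ⟨k % n, Nat.mod_lt _ C.npos⟩
  have hI : ∀ k, I (k + 1) = ⟨((I k).1 + 1) % n, Nat.mod_lt _ C.npos⟩ := fun k =>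
    Fin.ext (by simp [I, Nat.add_mod])
  choose a ha b hb hab using fun i => M.em_ends (C.edge i) _ _ (C.ends_eq i)
  -- Segment `k` enters the branch set of the `(k + 1)`-st vertex at the end `b k` of the
  -- model of edge `k` and leaves it along the model of edge `k + 1`.
  choose S hSwalk hSstart hSnodup hSmem hSa hSpar using fun k =>
    M.exists_walk_through_bs (hI k ▸ hb (I k)) (ha (I (k + 1))) (hab (I (k + 1)))
  set L := (List.range n).flatMap S
  obtain ⟨hLwalk, hLstart⟩ := isWalk_flatMap_range S (fun k => b (I k)) hSwalk hSstart n
  have hnd : (L.map Prod.fst).Nodup := by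
    rw [List.map_flatMap, List.nodup_flatMap]
    refine ⟨fun k _ => hSnodup k, List.nodup_range.pairwise_of_forall_ne ?_⟩
    intro k hk k' hk' hkk'
    have hne : C.vtx (I (k + 1)) ≠ C.vtx (I (k' + 1)) := fun h => hkk' <|
      Nat.eq_of_succ_mod_eq (List.mem_range.1 hk) (List.mem_range.1 hk')
        (congrArg Fin.val (C.vtx_inj h))
    exact fun v hv hv' =>
      Set.disjoint_left.1 (M.bs_disjoint _ _ hne) (hSmem k v hv) (hSmem k' v hv')
  have hodd : (L.map fun p => M.γ' p.2).sum = 1 := by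
    rw [List.sum_map_flatMap_range, Finset.sum_congr rfl fun k _ => hSpar k,
      Finset.sum_range_succ_of_eq (fun k => M.γ' (M.em (C.edge (I k)))) (by simp [I]),
      ← Fin.sum_univ_eq_sum_range, ← hC]
    refine Finset.sum_congr rfl fun i _ => ?_
    simp [I, Nat.mod_eq_of_lt i.2, M.em_parity]
  obtain ⟨D, hDsupp, hDodd⟩ :=
    exists_cycle_of_isWalk M.γ' hLwalk (by simpa [I] using hLstart) hnd hodd
  refine ⟨D, (D.parity_eq_of_isShift M.shift).symm.trans hDodd, fun v hv => ?_, fun i => ?_⟩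
  · rw [hDsupp, Set.mem_ofPred_eq, List.map_flatMap, List.mem_flatMap] at hv
    obtain ⟨k, -, hv⟩ := hv
    exact Set.mem_iUnion.2 ⟨_, hSmem k v hv⟩
  · set k := (i.1 + n - 1) % n
    have hk : I (k + 1) = i := Fin.ext (Nat.succ_mod_pred_mod i.2)
    refine ⟨a (I (k + 1)), hk ▸ ha _, ?_⟩
    rw [hDsupp, Set.mem_ofPred_eq, List.map_flatMap, List.mem_flatMap]
    exact ⟨k, List.mem_range.2 (Nat.mod_lt _ C.npos), hSa k⟩

lemma OCPOn_le (D : TreeDecomp G) {t : D.ι} {P : Set G.V}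
    (hadh : ∀ t', D.tree.Adj t t' → ((D.bag t ∩ D.bag t') \ P).ncard ≤ 1) :
    H.OCPOn γH ({v | (M.bs v ∩ D.bag t).Nonempty} \ {v | (M.bs v ∩ P).Nonempty})
      ≤ G.OCPOn γG (D.bag t \ P) := by
  refine OCP_le_of_expansion M.bs M.bs_disjoint fun C hC => ?_
  obtain ⟨C', hC'odd, hC'U, hC'meet⟩ := M.exists_cycle_expansion C.ofInduce hC
  have hS := Cycle.support_subset_of_induce C
  have : Nontrivial (Fin C.n) := Fin.nontrivial_iff_two_le.2 C.two_le_n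
  have hP : ∀ i, Disjoint (M.bs (C.vtx i)) P := fun i => Set.disjoint_iff_inter_eq_empty.2
    (Set.not_nonempty_iff_eq_empty.1 (hS (C.vtx_mem_support i)).2)
  have hbag : C'.support ⊆ D.bag t := D.support_subset_bag hadh (fun i => M.bs (C.vtx i))
    (fun i j hij => M.bs_disjoint _ _ (C.vtx_inj.ne hij)) (fun i => M.reflTransGen_adjIn _)
    (fun i => (hS (C.vtx_mem_support i)).1) hP C' hC'U hC'meet
  have hsub : C'.support ⊆ D.bag t \ P := fun x hx => by
    obtain ⟨i, hi⟩ := Set.mem_iUnion.1 (hC'U hx)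
    exact ⟨hbag hx, Set.disjoint_left.1 (hP i) hi⟩
  refine ⟨C'.toInduce hsub, hC'odd, fun x hx => ?_⟩
  obtain ⟨i, hi⟩ := Set.mem_iUnion.1 (hC'U hx)
  exact Set.mem_biUnion (C.vtx_mem_support i) hi

noncomputable def pushDecomp (D : TameOCPDecomp G γG) : TameOCPDecomp H γH where
  ι := D.ι
  tree := D.tree
  isTree := D.isTree
  bag r := {v | (M.bs v ∩ D.bag r).Nonempty}
  covers_vertex v := by
    obtain ⟨x, hx⟩ := M.bs_nonempty v
    obtain ⟨r, hr⟩ := D.covers_vertex x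
    exact ⟨r, x, hx, hr⟩
  covers_edge e := by
    obtain ⟨x, hx, y, hy, hxy⟩ := M.em_ends e (H.ep1 e) (H.ep2 e) (H.ends_ep e)
    obtain ⟨r, hr⟩ := D.covers_edge (M.em e)
    refine ⟨r, fun w hw => ?_⟩
    rw [H.ends_ep e] at hw
    rcases Sym2.mem_iff.1 hw with rfl | rfl
    · exact ⟨x, hx, hr x (by rw [hxy]; exact Sym2.mem_mk_left _ _)⟩
    · exact ⟨y, hy, hr y (by rw [hxy]; exact Sym2.mem_mk_right _ _)⟩
  bag_connected v :=
    D.induce_connected_of_reflTransGen (M.bs_nonempty v) (M.reflTransGen_adjIn v)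
  prot r := {v | (M.bs v ∩ D.prot r).Nonempty}
  prot_sub r := fun _ ⟨x, hx, hxr⟩ => ⟨x, hx, D.prot_sub r hxr⟩
  prot_adh r r' hrr' := by
    have key : ∀ v ∈ ({v | (M.bs v ∩ D.bag r).Nonempty} ∩
        {v | (M.bs v ∩ D.bag r').Nonempty}) \ {v | (M.bs v ∩ D.prot r).Nonempty},
        ∃ y ∈ M.bs v, y ∈ (D.bag r ∩ D.bag r') \ D.prot r := by
      rintro v ⟨⟨⟨p, hp, hpr⟩, ⟨q, hq, hqr'⟩⟩, hv⟩
      obtain ⟨y, hy, hyr, hyr'⟩ := D.exists_mem_adhesion hrr'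
        (M.reflTransGen_adjIn v p hp q hq) hp (SimpleGraph.mem_side_self _ _) hpr
        (SimpleGraph.mem_side_self _ _) hqr'
      exact ⟨y, hy, ⟨hyr, hyr'⟩, fun hyP => hv ⟨y, hy, hyP⟩⟩
    refine Set.ncard_le_one_iff_subsingleton.2 fun v hv w hw => ?_
    obtain ⟨y, hyv, hy⟩ := key v hv
    obtain ⟨y', hyw, hy'⟩ := key w hw
    have hyy' := Set.ncard_le_one_iff_subsingleton.1 (D.prot_adh r r' hrr') hy hy'
    by_contra hne
    exact Set.disjoint_left.1 (M.bs_disjoint v w hne) hyv (hyy' ▸ hyw)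

lemma twidth_pushDecomp_le (D : TameOCPDecomp G γG) :
    (M.pushDecomp D).twidth ≤ D.twidth := by
  have : Nonempty D.ι := D.isTree.connected.nonempty
  change (⨆ t : D.ι, _) ≤ ⨆ t : D.ι, _
  have hbdd : BddAbove
      (Set.range fun r => (D.prot r).ncard + G.OCPOn γG (D.bag r \ D.prot r)) := by
    refine ⟨Nat.card G.V + Nat.card G.V, ?_⟩
    rintro _ ⟨r, rfl⟩
    exact add_le_add (Set.ncard_le_card _) (OCP_le_card _ _)
  refine ciSup_le fun t => le_trans ?_ (le_ciSup hbdd t)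
  exact add_le_add (Set.ncard_le_ncard_of_disjoint_nonempty M.bs (fun v hv => hv) M.bs_disjoint)
    (M.OCPOn_le D.toTreeDecomp (D.prot_adh t))

end SignedMinorModel

lemma exists_twidth_eq_tOCPtw (G : MGraph) (γ : G.E → ZMod 2) :
    ∃ D : TameOCPDecomp G γ, D.twidth = tOCPtw G γ := by
  let D₀ : TameOCPDecomp G γ := {
    ι := Unit
    tree := ⊥
    isTree := ⟨⟨SimpleGraph.Preconnected.of_subsingleton⟩, SimpleGraph.isAcyclic_bot⟩
    bag _ := Set.univ
    covers_vertex _ := ⟨(), trivial⟩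
    covers_edge _ := ⟨(), fun _ _ => trivial⟩
    bag_connected _ := @SimpleGraph.Connected.mk _ _ SimpleGraph.Preconnected.of_subsingleton
      ⟨⟨(), trivial⟩⟩
    prot _ := ∅
    prot_sub _ := Set.empty_subset _
    prot_adh _ _ h := h.elim }
  exact Nat.sInf_mem
    (⟨D₀.twidth, D₀, rfl⟩ : {w | ∃ D : TameOCPDecomp G γ, D.twidth = w}.Nonempty)

/-- Tame OCP-treewidth is monotone under signed graph minors. -/
theorem statement_12 (H : MGraph) (γH : H.E → ZMod 2) (G : MGraph)
    (γG : G.E → ZMod 2) (h : IsSignedMinor H γH G γG) :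
    tOCPtw H γH ≤ tOCPtw G γG := by
  obtain ⟨M⟩ := h
  obtain ⟨D, hD⟩ := exists_twidth_eq_tOCPtw G γG
  calc tOCPtw H γH ≤ (M.pushDecomp D).twidth := Nat.sInf_le ⟨_, rfl⟩
    _ ≤ D.twidth := M.twidth_pushDecomp_le D
    _ = tOCPtw G γG := hD

end TDMPaper
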